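/- arXiv:1206.6991 — 2 statements merged into one kernel-verified Lean document; each statement's English description precedes it below -/
import Mathlib

section
/- For every real x > 0 and 0 < s < 1, the Gamma function satisfies x/(x+s)^{1-s} · Γ(x) ≤ Γ(x+s) ≤ x^s · Γ(x). -/
/-!
Both bounds come from the log-convexity of `Γ` on `(0, ∞)`. Writing `x + s` as the convex
combination `(1 - s) x + s (x + 1)` gives `Γ(x + s) ≤ Γ(x)^(1-s) Γ(x + 1)^s = x^s Γ(x)`.
The same inequality at the point `x + s` with exponent `1 - s` reads
`x Γ(x) = Γ(x + 1) ≤ (x + s)^(1-s) Γ(x + s)`, which is the lower bound.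
-/

open Real

namespace Real

theorem Gamma_add_le_rpow_mul_Gamma {x s : ℝ} (hx : 0 < x) (hs0 : 0 < s) (hs1 : s < 1) :
    Gamma (x + s) ≤ x ^ s * Gamma x := by
  have hΓx : 0 ≤ Gamma x := (Gamma_pos_of_pos hx).le
  have h := Gamma_mul_add_mul_le_rpow_Gamma_mul_rpow_Gamma hx (by linarith : 0 < x + 1)
    (sub_pos.mpr hs1) hs0 (sub_add_cancel 1 s)
  rw [show (1 - s) * x + s * (x + 1) = x + s by ring, Gamma_add_one hx.ne',
    mul_rpow hx.le hΓx] at h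
  calc Gamma (x + s) ≤ Gamma x ^ (1 - s) * (x ^ s * Gamma x ^ s) := h
    _ = x ^ s * Gamma x ^ (1 - s + s) := by rw [rpow_add' hΓx (by simp)]; ring
    _ = x ^ s * Gamma x := by rw [sub_add_cancel, rpow_one]

theorem div_rpow_mul_Gamma_le_Gamma_add {x s : ℝ} (hx : 0 < x) (hs0 : 0 < s) (hs1 : s < 1) :
    x / (x + s) ^ (1 - s) * Gamma x ≤ Gamma (x + s) := by
  have h := Gamma_add_le_rpow_mul_Gamma (by linarith : 0 < x + s) (sub_pos.mpr hs1)
    (by linarith : 1 - s < 1)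
  rw [add_add_sub_cancel, Gamma_add_one hx.ne'] at h
  rw [div_mul_eq_mul_div, div_le_iff₀ (by positivity), mul_comm (Gamma (x + s))]
  exact h

end Real

/-- Wendel's double inequality for the Gamma function. -/
theorem wendel_double_inequality (x s : ℝ) (hx : 0 < x) (hs0 : 0 < s) (hs1 : s < 1) :
    x / (x + s) ^ (1 - s) * Real.Gamma x ≤ Real.Gamma (x + s) ∧
      Real.Gamma (x + s) ≤ x ^ s * Real.Gamma x :=
  ⟨div_rpow_mul_Gamma_le_Gamma_add hx hs0 hs1, Gamma_add_le_rpow_mul_Gamma hx hs0 hs1⟩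
end

section
/- Let F be a distribution function with density f such that f(t)/t^α → C as t → 0+, where C ∈ (0,∞) and -1 < α < 1. Then for every ε > 0 with 0 < ε < C, there exists δ > 0 such that for all 0 < x < F(δ′) for suitable δ′, the quantile function satisfies ((1+α)/(C+ε))^{1/(1+α)} x^{1/(1+α)} < F⁻¹(x) < ((1+α)/(C-ε))^{1/(1+α)} x^{1/(1+α)}. -/
/-!
Near `0` the density is squeezed between `(C - ε) t^α` and `(C + ε) t^α`, so `F y` lies strictly
between `(C ∓ ε) y^(1+α) / (1+α)`. Since `f > 0` there, `F` is continuous and strictly increasing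
on `[0, δ]`, hence every `x ∈ (0, F δ)` has a unique preimage `y`, which is `F⁻¹ x`; solving the
two bounds on `F y = x` for `y` gives the claim.
-/

open MeasureTheory Set Filter Topology intervalIntegral

section

variable {f : ℝ → ℝ} {α δ : ℝ}

theorem exists_mul_rpow_lt_lt_of_tendsto {C a b : ℝ}
    (hlim : Tendsto (fun t => f t / t ^ α) (𝓝[>] 0) (𝓝 C)) (ha : a < C) (hb : C < b) :
    ∃ δ > 0, ∀ t ∈ Ioc 0 δ, a * t ^ α < f t ∧ f t < b * t ^ α := by
  obtain ⟨δ, hδ, hsub⟩ := mem_nhdsGT_iff_exists_Ioc_subset.1 (hlim (Ioo_mem_nhds ha hb))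
  refine ⟨δ, hδ, fun t ht => ?_⟩
  have htα : 0 < t ^ α := Real.rpow_pos_of_pos ht.1 α
  obtain ⟨hlow, hupp⟩ := hsub ht
  exact ⟨(lt_div_iff₀ htα).1 hlow, (div_lt_iff₀ htα).1 hupp⟩

theorem integral_lt_integral_of_lt_on {g : ℝ → ℝ} {a b : ℝ} (hab : a < b)
    (hf : IntervalIntegrable f volume a b) (hg : IntervalIntegrable g volume a b)
    (hfg : ∀ x ∈ Ioo a b, f x < g x) :
    ∫ x in a..b, f x < ∫ x in a..b, g x := by
  rw [← sub_pos, ← integral_sub hg hf]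
  exact intervalIntegral_pos_of_pos_on (hg.sub hf) (fun x hx => sub_pos.2 (hfg x hx)) hab

theorem integral_const_mul_rpow (hα : -1 < α) (c y : ℝ) :
    ∫ t in (0 : ℝ)..y, c * t ^ α = c * (y ^ (1 + α) / (1 + α)) := by
  rw [intervalIntegral.integral_const_mul, integral_rpow (Or.inl hα), add_comm α 1,
    Real.zero_rpow (by linarith), sub_zero]

theorem mul_rpow_lt_integral_lt_mul_rpow {a b : ℝ} (hα : -1 < α) (hf : IntegrableOn f (Icc 0 δ))
    (hbound : ∀ t ∈ Ioc 0 δ, a * t ^ α < f t ∧ f t < b * t ^ α) {y : ℝ} (hy : y ∈ Ioc 0 δ) :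
    a * (y ^ (1 + α) / (1 + α)) < ∫ t in (0 : ℝ)..y, f t ∧
      ∫ t in (0 : ℝ)..y, f t < b * (y ^ (1 + α) / (1 + α)) := by
  have hfy : IntervalIntegrable f volume 0 y :=
    (hf.mono_set (uIcc_subset_Icc ⟨le_rfl, hy.1.le.trans hy.2⟩ ⟨hy.1.le, hy.2⟩)).intervalIntegrable
  have hbound' : ∀ t ∈ Ioo 0 y, a * t ^ α < f t ∧ f t < b * t ^ α :=
    fun t ht => hbound t ⟨ht.1, ht.2.le.trans hy.2⟩
  rw [← integral_const_mul_rpow hα a, ← integral_const_mul_rpow hα b]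
  have hrpow : IntervalIntegrable (fun t => t ^ α) volume 0 y := intervalIntegrable_rpow' hα
  exact ⟨integral_lt_integral_of_lt_on hy.1 (hrpow.const_mul a) hfy (fun t ht => (hbound' t ht).1),
    integral_lt_integral_of_lt_on hy.1 hfy (hrpow.const_mul b) (fun t ht => (hbound' t ht).2)⟩

theorem strictMonoOn_integral_of_pos (hf : IntegrableOn f (Icc 0 δ))
    (hpos : ∀ t ∈ Ioc 0 δ, 0 < f t) :
    StrictMonoOn (fun y => ∫ t in (0 : ℝ)..y, f t) (Icc 0 δ) := by
  intro z hz y hy hzy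
  have hz0 : (0 : ℝ) ∈ Icc 0 δ := ⟨le_rfl, hz.1.trans hz.2⟩
  rw [← sub_pos, integral_interval_sub_left (hf.mono_set (uIcc_subset_Icc hz0 hy)).intervalIntegrable
    (hf.mono_set (uIcc_subset_Icc hz0 hz)).intervalIntegrable]
  exact intervalIntegral_pos_of_pos_on (hf.mono_set (uIcc_subset_Icc hz hy)).intervalIntegrable
    (fun t ht => hpos t ⟨hz.1.trans_lt ht.1, ht.2.le.trans hy.2⟩) hzy

theorem csInf_setOf_le_eq {F : ℝ → ℝ} {x y : ℝ} (hFy : F y = x) (hlt : ∀ z < y, F z < x) :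
    sInf {z | x ≤ F z} = y :=
  IsLeast.csInf_eq ⟨hFy.ge, fun z hz => not_lt.1 fun hzy => (hlt z hzy).not_ge hz⟩

theorem exists_mem_Ioo_eq_and_csInf_eq {F : ℝ → ℝ} (hF : ∀ x, F x = ∫ t in Ioc 0 x, f t)
    (hf : IntegrableOn f (Icc 0 δ)) (hpos : ∀ t ∈ Ioc 0 δ, 0 < f t) {x : ℝ} (hx : 0 < x)
    (hxδ : x < F δ) :
    ∃ y ∈ Ioo 0 δ, F y = x ∧ sInf {z | x ≤ F z} = y := by
  have hF_of_nonpos : ∀ z ≤ 0, F z = 0 := fun z hz => by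
    rw [hF, Ioc_eq_empty hz.not_gt, Measure.restrict_empty, integral_zero_measure]
  have hδ : 0 ≤ δ := by
    by_contra! hδ
    rw [hF_of_nonpos δ hδ.le] at hxδ
    exact hxδ.not_gt hx
  have hFeq : ∀ y, 0 ≤ y → F y = ∫ t in (0 : ℝ)..y, f t := fun y hy => by
    rw [hF, integral_of_le hy]
  have hcont : ContinuousOn (fun y => ∫ t in (0 : ℝ)..y, f t) (Icc 0 δ) :=
    (continuousOn_primitive_interval (by rwa [uIcc_of_le hδ])).mono Icc_subset_uIcc
  have hxmem : x ∈ Ioo (∫ t in (0 : ℝ)..0, f t) (∫ t in (0 : ℝ)..δ, f t) := by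
    rw [integral_same, ← hFeq δ hδ]
    exact ⟨hx, hxδ⟩
  obtain ⟨y, hy, hGy⟩ := intermediate_value_Ioo hδ hcont hxmem
  have hFy : F y = x := (hFeq y hy.1.le).trans hGy
  refine ⟨y, hy, hFy, csInf_setOf_le_eq hFy fun z hzy => ?_⟩
  rcases le_or_gt z 0 with hz | hz
  · rwa [hF_of_nonpos z hz]
  · rw [hFeq z hz.le, ← hGy]
    exact strictMonoOn_integral_of_pos hf hpos ⟨hz.le, hzy.le.trans hy.2.le⟩
      ⟨hy.1.le, hy.2.le⟩ hzy

end

theorem mul_rpow_one_div_lt_iff {p c x y : ℝ} (hp : 0 < p) (hc : 0 < c) (hx : 0 ≤ x)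
    (hy : 0 ≤ y) :
    (p / c) ^ (1 / p) * x ^ (1 / p) < y ↔ x < c * (y ^ p / p) := by
  rw [← Real.mul_rpow (by positivity) hx, one_div, Real.rpow_inv_lt_iff_of_pos (by positivity) hy hp,
    div_mul_eq_mul_div, div_lt_iff₀ hc, mul_div_assoc', lt_div_iff₀ hp, mul_comm x, mul_comm c]

theorem lt_mul_rpow_one_div_iff {p c x y : ℝ} (hp : 0 < p) (hc : 0 < c) (hx : 0 ≤ x)
    (hy : 0 ≤ y) :
    y < (p / c) ^ (1 / p) * x ^ (1 / p) ↔ c * (y ^ p / p) < x := by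
  rw [← Real.mul_rpow (by positivity) hx, one_div, Real.lt_rpow_inv_iff_of_pos hy (by positivity) hp,
    div_mul_eq_mul_div, lt_div_iff₀ hc, mul_div_assoc', div_lt_iff₀ hp, mul_comm x, mul_comm c]

theorem quantile_bounds_near_zero_general (f : ℝ → ℝ)
    (α C : ℝ) (hα1 : -1 < α)
    (hlim : Filter.Tendsto (fun t => f t / t ^ α) (nhdsWithin 0 (Set.Ioi 0)) (nhds C))
    (F : ℝ → ℝ) (hF : ∀ x, F x = ∫ t in Set.Ioc (0 : ℝ) x, f t)
    (Finv : ℝ → ℝ) (hFinv : ∀ u, Finv u = sInf {y | u ≤ F y}) :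
    ∀ ε, 0 < ε → ε < C → ∃ δ > (0 : ℝ), ∀ x, 0 < x → x < F δ →
      ((1 + α) / (C + ε)) ^ (1 / (1 + α)) * x ^ (1 / (1 + α)) < Finv x ∧
        Finv x < ((1 + α) / (C - ε)) ^ (1 / (1 + α)) * x ^ (1 / (1 + α)) := by
  intro ε hε hεC
  have hp : 0 < 1 + α := by linarith
  obtain ⟨δ, hδ, hbound⟩ :=
    exists_mul_rpow_lt_lt_of_tendsto hlim (sub_lt_self C hε) (lt_add_of_pos_right C hε)
  refine ⟨δ, hδ, fun x hx hxδ => ?_⟩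
  have hf : IntegrableOn f (Icc 0 δ) := by
    by_contra hf
    rw [integrableOn_Icc_iff_integrableOn_Ioc] at hf
    rw [hF, integral_undef hf] at hxδ
    exact hxδ.not_gt hx
  have hpos : ∀ t ∈ Ioc 0 δ, 0 < f t := fun t ht =>
    (mul_pos (sub_pos.2 hεC) (Real.rpow_pos_of_pos ht.1 α)).trans (hbound t ht).1
  obtain ⟨y, hy, hFy, hquantile⟩ := exists_mem_Ioo_eq_and_csInf_eq hF hf hpos hx hxδ
  obtain ⟨hlow, hupp⟩ := mul_rpow_lt_integral_lt_mul_rpow hα1 hf hbound (Ioo_subset_Ioc_self hy)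
  rw [integral_of_le hy.1.le, ← hF, hFy] at hlow hupp
  rw [hFinv, hquantile]
  exact ⟨(mul_rpow_one_div_lt_iff hp (by linarith) hx.le hy.1.le).2 hupp,
    (lt_mul_rpow_one_div_iff hp (sub_pos.2 hεC) hx.le hy.1.le).2 hlow⟩

/-- Bounds on the quantile function near `0` when the density satisfies
`f(t)/t^α → C` as `t → 0+`. -/
theorem quantile_bounds_near_zero (f : ℝ → ℝ) (hf : ∀ t, 0 ≤ f t)
    (α C : ℝ) (hα1 : -1 < α) (hα2 : α < 1) (hC : 0 < C)
    (hlim : Filter.Tendsto (fun t => f t / t ^ α) (nhdsWithin 0 (Set.Ioi 0)) (nhds C))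
    (F : ℝ → ℝ) (hF : ∀ x, F x = ∫ t in Set.Ioc (0 : ℝ) x, f t)
    (Finv : ℝ → ℝ) (hFinv : ∀ u, Finv u = sInf {y | u ≤ F y}) :
    ∀ ε, 0 < ε → ε < C → ∃ δ > (0 : ℝ), ∀ x, 0 < x → x < F δ →
      ((1 + α) / (C + ε)) ^ (1 / (1 + α)) * x ^ (1 / (1 + α)) < Finv x ∧
        Finv x < ((1 + α) / (C - ε)) ^ (1 / (1 + α)) * x ^ (1 / (1 + α)) :=
  quantile_bounds_near_zero_general f α C hα1 hlim F hF Finv hFinv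
end
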